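/- Let (Ω, 𝒜, T, f) be a dynamic Markov process, model M with valuation v, and φ a formula. For rationals r₁,…,r_k, r ∈ [0,1], define the iterated set L_{r₁…r_k r}(A) := L_{r₁}(L_{r₂}(…L_r(A)…)) where L_s(B) := {w | T(w,B) ≥ s}. Then for any measurable A and any r, L_{r₁…r_k r}(A) = ⋂_{s ∈ ℚ, 0 ≤ s < r} L_{r₁…r_k s}(A). -/

import Mathlib

/-!
For a single operator, `T w A ≥ r` holds iff `T w A ≥ s` for every rational `s < r`, since
`T w A` is finite and the rationals are dense. The outer operators `L_{r₁}, …, L_{r_k}` then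
commute with the intersection: the sets `L_s(A)`, `s < r`, form a countable decreasing family
of measurable sets, each `L_q` is monotone and preserves measurability, and by continuity from
above `T(w, ⋂ B_s) = inf_s T(w, B_s)`, so `L_q (⋂ B_s) = ⋂ L_q(B_s)`. When `r ≤ 0` the
intersection is empty and both sides are the whole space.
-/

open MeasureTheory

/-- One application of the probability operator `L_s` as a set operation. -/
def Lset {Ω : Type*} [MeasurableSpace Ω] (T : Ω → Measure Ω) (s : ℚ) (B : Set Ω) : Set Ω :=
  {w | ENNReal.ofReal (s : ℝ) ≤ T w B}

/-- The iterated operator `L_{r₁…r_k}` applied to a set. -/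
def LIter {Ω : Type*} [MeasurableSpace Ω] (T : Ω → Measure Ω) (l : List ℚ) (A : Set Ω) :
    Set Ω :=
  l.foldr (fun r B => Lset T r B) A

section

variable {Ω : Type*} [MeasurableSpace Ω] (T : Ω → Measure Ω)

lemma Lset_mono (s : ℚ) {B C : Set Ω} (h : B ⊆ C) : Lset T s B ⊆ Lset T s C :=
  fun _ hw => le_trans hw (measure_mono h)

lemma Lset_anti {s t : ℚ} (h : s ≤ t) (B : Set Ω) : Lset T t B ⊆ Lset T s B :=
  fun _ hw => le_trans (ENNReal.ofReal_le_ofReal (by exact_mod_cast h)) hw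

lemma LIter_mono (l : List ℚ) {B C : Set Ω} (h : B ⊆ C) : LIter T l B ⊆ LIter T l C := by
  induction l with
  | nil => exact h
  | cons q l ih => exact Lset_mono T q ih

lemma LIter_cons (q : ℚ) (l : List ℚ) (A : Set Ω) :
    LIter T (q :: l) A = Lset T q (LIter T l A) := rfl

lemma LIter_append_singleton (l : List ℚ) (r : ℚ) (A : Set Ω) :
    LIter T (l ++ [r]) A = LIter T l (Lset T r A) := by
  simp only [LIter, List.foldr_append, List.foldr_cons, List.foldr_nil]

lemma LIter_measurableSet (hmeas : ∀ A : Set Ω, MeasurableSet A → Measurable fun w => T w A)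
    (l : List ℚ) {A : Set Ω} (hA : MeasurableSet A) : MeasurableSet (LIter T l A) := by
  induction l with
  | nil => exact hA
  | cons q l ih => exact hmeas _ ih measurableSet_Ici

lemma Lset_univ (hprob : ∀ w, IsProbabilityMeasure (T w)) {q : ℚ} (hq : q ≤ 1) :
    Lset T q Set.univ = Set.univ := by
  ext w
  simp only [Lset, Set.mem_ofPred_eq, measure_univ, Set.mem_univ, iff_true]
  exact ENNReal.ofReal_le_one.mpr (by exact_mod_cast hq)

lemma LIter_univ (hprob : ∀ w, IsProbabilityMeasure (T w)) (l : List ℚ) (hl : ∀ q ∈ l, q ≤ 1) :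
    LIter T l Set.univ = Set.univ := by
  induction l with
  | nil => rfl
  | cons q l ih =>
    rw [LIter_cons, ih fun p hp => hl p (List.mem_cons_of_mem q hp),
      Lset_univ T hprob (hl q List.mem_cons_self)]

variable [∀ w, IsFiniteMeasure (T w)]

lemma Lset_eq_iInter_rat_lt (r : ℚ) (B : Set Ω) :
    Lset T r B = ⋂ s : {s : ℚ // 0 ≤ s ∧ s < r}, Lset T s B := by
  ext w
  simp only [Set.mem_iInter, Subtype.forall]
  refine ⟨fun h s hs => Lset_anti T hs.2.le B h, fun h => ?_⟩
  have hfin : T w B ≠ ⊤ := measure_ne_top (T w) B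
  refine (ENNReal.ofReal_le_iff_le_toReal hfin).mpr (le_of_forall_rat_lt_imp_le fun s hs => ?_)
  rcases lt_or_ge s 0 with hs0 | hs0
  · exact (Rat.cast_lt_zero.mpr hs0).le.trans ENNReal.toReal_nonneg
  · exact (ENNReal.ofReal_le_iff_le_toReal hfin).mp (h s ⟨hs0, by exact_mod_cast hs⟩)

variable {ι : Type*} [Countable ι] [Nonempty ι]

lemma Lset_iInter_of_directed (q : ℚ) {B : ι → Set Ω} (hB : ∀ i, MeasurableSet (B i))
    (hdir : Directed (· ⊇ ·) B) : Lset T q (⋂ i, B i) = ⋂ i, Lset T q (B i) := by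
  ext w
  have hinf : T w (⋂ i, B i) = ⨅ i, T w (B i) :=
    hdir.measure_iInter (fun i => (hB i).nullMeasurableSet)
      ⟨Classical.arbitrary ι, measure_ne_top _ _⟩
  simp only [Lset, Set.mem_ofPred_eq, Set.mem_iInter, hinf, le_iInf_iff]

lemma LIter_iInter_of_directed (hmeas : ∀ A : Set Ω, MeasurableSet A → Measurable fun w => T w A)
    (l : List ℚ) {B : ι → Set Ω} (hB : ∀ i, MeasurableSet (B i)) (hdir : Directed (· ⊇ ·) B) :
    LIter T l (⋂ i, B i) = ⋂ i, LIter T l (B i) := by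
  induction l with
  | nil => rfl
  | cons q l ih =>
    have hdir' : Directed (· ⊇ ·) fun i => LIter T l (B i) :=
      hdir.mono_comp (· ⊇ ·) (rb := (· ⊇ ·)) (g := LIter T l) fun _ _ h => LIter_mono T l h
    simp only [LIter_cons]
    rw [ih, Lset_iInter_of_directed T q (fun i => LIter_measurableSet T hmeas l (hB i)) hdir']

end

theorem stmt_18_general {Ω : Type*} [MeasurableSpace Ω] (T : Ω → Measure Ω)
    (hprob : ∀ w, IsProbabilityMeasure (T w))
    (hmeas : ∀ A : Set Ω, MeasurableSet A → Measurable fun w => T w A)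
    (rs : List ℚ) (hrs : ∀ q ∈ rs, 0 ≤ q ∧ q ≤ 1)
    (r : ℚ)
    (A : Set Ω) (hA : MeasurableSet A) :
    LIter T (rs ++ [r]) A =
      ⋂ s : {s : ℚ // 0 ≤ s ∧ s < r}, LIter T (rs ++ [(s : ℚ)]) A := by
  simp only [LIter_append_singleton]
  rw [Lset_eq_iInter_rat_lt T r A]
  rcases isEmpty_or_nonempty {s : ℚ // 0 ≤ s ∧ s < r} with hempty | hnonempty
  · rw [Set.iInter_of_empty, Set.iInter_of_empty, LIter_univ T hprob rs fun q hq => (hrs q hq).2]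
  · refine LIter_iInter_of_directed T hmeas rs
      (fun s => hmeas A hA measurableSet_Ici) (directed_of_isDirected_le ?_)
    exact fun s t hst => Lset_anti T hst A

/-- Fact 2.8: `L_{r₁…r_k r}(A)` is the intersection over rationals `0 ≤ s < r` of
`L_{r₁…r_k s}(A)`. -/
theorem stmt_18 {Ω : Type*} [MeasurableSpace Ω] (T : Ω → Measure Ω)
    (hprob : ∀ w, IsProbabilityMeasure (T w))
    (hmeas : ∀ A : Set Ω, MeasurableSet A → Measurable fun w => T w A)
    (rs : List ℚ) (hrs : ∀ q ∈ rs, 0 ≤ q ∧ q ≤ 1)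
    (r : ℚ) (hr0 : 0 ≤ r) (hr1 : r ≤ 1)
    (A : Set Ω) (hA : MeasurableSet A) :
    LIter T (rs ++ [r]) A =
      ⋂ s : {s : ℚ // 0 ≤ s ∧ s < r}, LIter T (rs ++ [(s : ℚ)]) A :=
  stmt_18_general T hprob hmeas rs hrs r A hA
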